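/- Let n ≥ 1, let λ > 1 be a real number, and set s = √(1/(1 − 1/λ²)). Let p, q, q_a : ℝ → EuclideanSpace ℝ (Fin n). Assume q is 1-Lipschitz; for every t ≥ 0, p t ≠ q_a t and ‖q_a t − q t‖ ≤ ‖p t − q t‖ / λ; and p is differentiable with deriv p t = s·(q_a t − p t) / ‖q_a t − p t‖ for every t ≥ 0 (greedy tracking at speed s). Then for all t ≥ 0, ‖p t − q t‖ ≤ ‖p 0 − q 0‖. -/

import Mathlib

/-!
The tracker's velocity `v = s • u`, with `u` the unit vector towards the observed location, makes
an angle with the true direction to the target whose cosine is at least `√(1 - 1/λ²) = 1/s`, so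
the tracker closes in on the target at rate at least `1`. Since the target moves at unit speed,
the upper right Dini derivative of the distance is `≤ 0`, and the distance is nonincreasing.
-/

open Set
open scoped Topology NNReal RealInnerProductSpace

variable {E : Type*} [NormedAddCommGroup E] [InnerProductSpace ℝ E]

theorem HasDerivAt.norm {f : ℝ → E} {f' : E} {x : ℝ} (hf : HasDerivAt f f' x) (h0 : f x ≠ 0) :
    HasDerivAt (‖f ·‖) (⟪f x, f'⟫ / ‖f x‖) x := by
  have hsq : HasDerivAt (fun y => √(‖f y‖ ^ 2)) (2 * ⟪f x, f'⟫ / (2 * √(‖f x‖ ^ 2))) x :=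
    hf.norm_sq.sqrt (by positivity)
  simp only [Real.sqrt_sq (norm_nonneg _)] at hsq
  convert hsq using 1
  field_simp

theorem mul_sqrt_one_sub_sq_le_inner {a b : E} {c : ℝ} (hc : c ^ 2 ≤ 1)
    (h : ‖a - b‖ ≤ c * ‖b‖) : ‖a‖ * ‖b‖ * √(1 - c ^ 2) ≤ ⟪a, b⟫ := by
  set k := √(1 - c ^ 2)
  have hk : k ^ 2 = 1 - c ^ 2 := Real.sq_sqrt (by linarith)
  have hsq : ‖a‖ ^ 2 - 2 * ⟪a, b⟫ + ‖b‖ ^ 2 ≤ c ^ 2 * ‖b‖ ^ 2 := by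
    rw [← norm_sub_sq_real, ← mul_pow]
    exact pow_le_pow_left₀ (norm_nonneg _) h 2
  -- AM-GM: `2 ‖a‖ (k ‖b‖) ≤ ‖a‖² + k² ‖b‖²`
  nlinarith [sq_nonneg (‖a‖ - k * ‖b‖)]

/-- A tracker at `x` moving at speed `√(1/(1 - 1/λ²))` towards `z`, an observation of the target
`y` with relative error `1/λ`, closes in on `y` at rate at least `1`. -/
theorem inner_tracking_velocity_le {lam : ℝ} (hlam : 1 < lam) {x y z : E} (hxz : x ≠ z)
    (herr : ‖z - y‖ ≤ ‖x - y‖ / lam) :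
    ⟪x - y, (√(1 / (1 - 1 / lam ^ 2)) / ‖z - x‖) • (z - x)⟫ ≤ -‖x - y‖ := by
  have hk : 0 < 1 - 1 / lam ^ 2 := by
    have : 1 / lam ^ 2 < 1 := (div_lt_one (by positivity)).2 (by nlinarith)
    linarith
  set s := √(1 / (1 - 1 / lam ^ 2))
  set k := √(1 - 1 / lam ^ 2)
  have hsk : s * k = 1 := by
    rw [← Real.sqrt_mul (by positivity), one_div_mul_cancel hk.ne', Real.sqrt_one]
  have hzx : 0 < ‖z - x‖ := norm_pos_iff.2 (sub_ne_zero.2 hxz.symm)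
  have hcos : ‖z - x‖ * ‖y - x‖ * k ≤ ⟪z - x, y - x⟫ := by
    have hc : (1 / lam) ^ 2 ≤ 1 := by
      rw [one_div_pow]; exact (div_le_one (by positivity)).2 (by nlinarith)
    simpa only [one_div_pow] using mul_sqrt_one_sub_sq_le_inner hc (by
      rw [sub_sub_sub_cancel_right, norm_sub_rev y x, one_div_mul_eq_div]; exact herr)
  rw [norm_sub_rev x y, ← neg_sub y x, inner_neg_left, real_inner_smul_right, real_inner_comm]
  calc -(s / ‖z - x‖ * ⟪z - x, y - x⟫)
      ≤ -(s / ‖z - x‖ * (‖z - x‖ * ‖y - x‖ * k)) := by gcongr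
    _ = -(s * k * ‖y - x‖) := by field_simp
    _ = -‖y - x‖ := by rw [hsk, one_mul]

/-- Against the target frozen at its time-`x` position the distance is differentiable with
derivative `≤ -L`, and the target's own motion adds at most `L` to the slope. -/
theorem eventually_slope_norm_sub_lt {p q : ℝ → E} {p' : E} {x : ℝ} {L : ℝ≥0}
    (hp : HasDerivAt p p' x) (hq : LipschitzWith L q) (hpq : p x ≠ q x)
    (hclose : ⟪p x - q x, p'⟫ ≤ -L * ‖p x - q x‖) {r : ℝ} (hr : 0 < r) :
    ∀ᶠ z in 𝓝[>] x, slope (fun t => ‖p t - q t‖) x z < r := by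
  have hpos : 0 < ‖p x - q x‖ := norm_pos_iff.2 (sub_ne_zero.2 hpq)
  have hfrozen := (hp.sub_const (q x)).norm (sub_ne_zero.2 hpq)
  have hrate : ⟪p x - q x, p'⟫ / ‖p x - q x‖ < r - L := by
    rw [div_lt_iff₀ hpos]; nlinarith
  have hslope := ((hasDerivAt_iff_tendsto_slope.1 hfrozen).mono_left
    (nhdsWithin_mono x fun z hz => ne_of_gt hz)).eventually_lt_const hrate
  filter_upwards [hslope, self_mem_nhdsWithin] with z hz hxz
  replace hxz : 0 < z - x := sub_pos.2 hxz
  have hmove : ‖q x - q z‖ ≤ L * (z - x) := by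
    have := hq.dist_le_mul z x
    rwa [dist_eq_norm', Real.dist_eq, abs_of_pos hxz] at this
  have htri : ‖p z - q z‖ ≤ ‖p z - q x‖ + ‖q x - q z‖ := norm_sub_le_norm_sub_add_norm_sub _ _ _
  rw [slope_def_field, div_lt_iff₀ hxz] at hz ⊢
  linarith

theorem norm_sub_le_of_inner_deriv_le {p q p' : ℝ → E} {L : ℝ≥0} {a : ℝ}
    (hp : ∀ t ≥ a, HasDerivAt p (p' t) t) (hq : LipschitzWith L q) (hpq : ∀ t ≥ a, p t ≠ q t)
    (hclose : ∀ t ≥ a, ⟪p t - q t, p' t⟫ ≤ -L * ‖p t - q t‖) :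
    ∀ t ≥ a, ‖p t - q t‖ ≤ ‖p a - q a‖ := by
  intro T hT
  have hcont : ContinuousOn (fun t => ‖p t - q t‖) (Icc a T) := fun t ht =>
    (((hp t ht.1).continuousAt.sub hq.continuous.continuousAt).norm).continuousWithinAt
  refine image_le_of_liminf_slope_right_le_deriv_boundary hcont (B := fun _ => ‖p a - q a‖)
    (B' := 0) le_rfl continuousOn_const (fun _ _ => hasDerivWithinAt_const _ _ _)
    (fun t ht r hr => ?_) ⟨hT, le_rfl⟩
  exact (eventually_slope_norm_sub_lt (hp t ht.1) hq (hpq t ht.1) (hclose t ht.1) hr).frequently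

theorem speedup_tracking_upper_bound_general
    (n : ℕ) (lam : ℝ) (hlam : 1 < lam)
    (s : ℝ) (hs : s = Real.sqrt (1 / (1 - 1 / lam ^ 2)))
    (p q qa : ℝ → EuclideanSpace ℝ (Fin n))
    (hq : LipschitzWith 1 q)
    (hne : ∀ t ≥ (0 : ℝ), p t ≠ qa t)
    (herr : ∀ t ≥ (0 : ℝ), ‖qa t - q t‖ ≤ ‖p t - q t‖ / lam)
    (hdiff : Differentiable ℝ p)
    (hderiv : ∀ t ≥ (0 : ℝ), deriv p t = (s / ‖qa t - p t‖) • (qa t - p t)) :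
    ∀ t ≥ (0 : ℝ), ‖p t - q t‖ ≤ ‖p 0 - q 0‖ := by
  have hpq : ∀ t ≥ (0 : ℝ), p t ≠ q t := by
    intro t ht hpq
    have hqa := herr t ht
    rw [hpq, sub_self, norm_zero, zero_div] at hqa
    exact hne t ht (hpq.trans (sub_eq_zero.1 (norm_le_zero_iff.1 hqa)).symm)
  refine norm_sub_le_of_inner_deriv_le (fun t _ => (hdiff t).hasDerivAt) hq hpq fun t ht => ?_
  rw [hderiv t ht, hs, NNReal.coe_one, neg_one_mul]
  exact inner_tracking_velocity_le hlam (hne t ht) (herr t ht)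

/-- **Sufficient speedup for the tracker.** If the target `q` has unit speed, the
observed location satisfies the relative error bound with parameter `λ > 1`, and
the tracker moves at speed `s = √(1/(1 − 1/λ²))` directly toward the observed
location, then the tracker–target distance never exceeds its initial value. -/
theorem speedup_tracking_upper_bound
    (n : ℕ) (hn : 1 ≤ n) (lam : ℝ) (hlam : 1 < lam)
    (s : ℝ) (hs : s = Real.sqrt (1 / (1 - 1 / lam ^ 2)))
    (p q qa : ℝ → EuclideanSpace ℝ (Fin n))
    (hq : LipschitzWith 1 q)
    (hne : ∀ t ≥ (0 : ℝ), p t ≠ qa t)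
    (herr : ∀ t ≥ (0 : ℝ), ‖qa t - q t‖ ≤ ‖p t - q t‖ / lam)
    (hdiff : Differentiable ℝ p)
    (hderiv : ∀ t ≥ (0 : ℝ), deriv p t = (s / ‖qa t - p t‖) • (qa t - p t)) :
    ∀ t ≥ (0 : ℝ), ‖p t - q t‖ ≤ ‖p 0 - q 0‖ :=
  speedup_tracking_upper_bound_general n lam hlam s hs p q qa hq hne herr hdiff hderiv
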